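/- arXiv:2202.03790 — 2 statements merged into one kernel-verified Lean document; each statement's English description precedes it below -/
import Mathlib

section
/- Let A be a bounded linear operator on H. Then for every real number r ≥ 1 and every α ∈ [0,1], ber(A)^{2r} ≤ ber(α·|A|^{2r} + (1−α)·|A*|^{2r}). -/
set_option synthInstance.maxHeartbeats 1000000
set_option maxHeartbeats 1000000

open scoped NNReal
open ContinuousLinearMap

/-- The Berezin number of an operator `T`, relative to the family `k` of
(normalized reproducing kernel) vectors indexed by `Ω`. -/
noncomputable def ber {H : Type*} [NormedAddCommGroup H] [InnerProductSpace ℂ H]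
    {Ω : Type*} (k : Ω → H) (T : H →L[ℂ] H) : ℝ :=
  ⨆ lam : Ω, ‖(inner ℂ (T (k lam)) (k lam) : ℂ)‖

/-- The absolute value `|T| = (T*T)^(1/2)` of a bounded operator. -/
noncomputable def opAbs {H : Type*} [NormedAddCommGroup H] [InnerProductSpace ℂ H]
    [CompleteSpace H] (T : H →L[ℂ] H) : H →L[ℂ] H :=
  CFC.sqrt (adjoint T * T)

/-!
For a unit vector `x`, `|⟪A x, x⟫| ≤ ‖A x‖` and `‖A x‖² = ⟪|A|² x, x⟫`. McCarthy's inequality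
`⟪P x, x⟫ ^ r ≤ ⟪P ^ r x, x⟫` (`P ≥ 0`, `r ≥ 1`) follows by applying the functional calculus to
the tangent line of `t ↦ t ^ r` at `⟪P x, x⟫`, and with `P = |A|²` it gives
`|⟪A x, x⟫| ^ (2r) ≤ ⟪|A| ^ (2r) x, x⟫`; the same bound holds for `|A*|` since
`|⟪A* x, x⟫| = |⟪A x, x⟫|`. A convex combination of the two bounds, and the supremum over the
normalized kernels, give the theorem.
-/

open scoped InnerProductSpace

lemma rpow_add_mul_sub_le_rpow {c t r : ℝ} (hc : 0 < c) (ht : 0 ≤ t) (hr : 1 ≤ r) :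
    c ^ r + r * c ^ (r - 1) * (t - c) ≤ t ^ r := by
  have bernoulli := one_add_mul_self_le_rpow_one_add
    (show -1 ≤ t / c - 1 by linarith [div_nonneg ht hc.le]) hr
  rw [add_sub_cancel, Real.div_rpow ht hc.le] at bernoulli
  have hcr : c ^ r = c ^ (r - 1) * c := by
    rw [← Real.rpow_add_one hc.ne', sub_add_cancel]
  have key := mul_le_mul_of_nonneg_left bernoulli (Real.rpow_nonneg hc.le r)
  rw [mul_div_cancel₀ _ (Real.rpow_pos_of_pos hc r).ne'] at key
  calc c ^ r + r * c ^ (r - 1) * (t - c) = c ^ r * (1 + r * (t / c - 1)) := by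
        rw [hcr]; field_simp
    _ ≤ t ^ r := key

section Operators

variable {H : Type*} [NormedAddCommGroup H] [InnerProductSpace ℂ H]

lemma re_inner_le_re_inner_of_le {X Y : H →L[ℂ] H} (h : X ≤ Y) (x : H) :
    (⟪X x, x⟫_ℂ).re ≤ (⟪Y x, x⟫_ℂ).re := by
  have := h.re_inner_nonneg_left x
  simp only [sub_apply, inner_sub_left, map_sub, RCLike.re_to_complex] at this
  linarith

lemma re_inner_real_smul_left (a : ℝ) (y x : H) :
    (⟪a • y, x⟫_ℂ).re = a * (⟪y, x⟫_ℂ).re := by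
  rw [← Complex.coe_smul, inner_smul_left, Complex.conj_ofReal, Complex.re_ofReal_mul]

lemma re_inner_algebraMap_add_smul_apply_self (a b : ℝ) (P : H →L[ℂ] H) {x : H}
    (hx : ‖x‖ = 1) :
    (⟪(algebraMap ℝ (H →L[ℂ] H) a + b • P) x, x⟫_ℂ).re = a + b * (⟪P x, x⟫_ℂ).re := by
  have hxx : ⟪x, x⟫_ℂ = 1 := by rw [inner_self_eq_norm_sq_to_K, hx]; norm_num
  simp only [add_apply, inner_add_left, Algebra.algebraMap_eq_smul_one, smul_apply,
    one_apply_eq_self, Complex.add_re, re_inner_real_smul_left, hxx, Complex.one_re,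
    mul_one]

lemma le_re_inner_smul_add_smul_apply_self {X Y : H →L[ℂ] H} {x : H} {c α : ℝ}
    (hα : α ∈ Set.Icc (0 : ℝ) 1) (hX : c ≤ (⟪X x, x⟫_ℂ).re) (hY : c ≤ (⟪Y x, x⟫_ℂ).re) :
    c ≤ (⟪(α • X + (1 - α) • Y) x, x⟫_ℂ).re := by
  simp only [add_apply, smul_apply, inner_add_left, Complex.add_re, re_inner_real_smul_left]
  nlinarith [hα.1, hα.2]

lemma bddAbove_range_norm_inner_apply {Ω : Type*} {k : Ω → H} (hk : ∀ lam, ‖k lam‖ ≤ 1)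
    (T : H →L[ℂ] H) : BddAbove (Set.range fun lam => ‖⟪T (k lam), k lam⟫_ℂ‖) := by
  refine ⟨‖T‖, Set.forall_mem_range.mpr fun lam => ?_⟩
  calc ‖⟪T (k lam), k lam⟫_ℂ‖ ≤ ‖T (k lam)‖ * ‖k lam‖ := norm_inner_le_norm _ _
    _ ≤ ‖T‖ * 1 * 1 := by gcongr; exacts [T.le_opNorm_of_le (hk lam), hk lam]
    _ = ‖T‖ := by ring

lemma ber_rpow_le_ber {Ω : Type*} {k : Ω → H} (hk : ∀ lam, ‖k lam‖ ≤ 1) {A T : H →L[ℂ] H}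
    {p : ℝ} (hp : 0 < p) (h : ∀ lam, ‖⟪A (k lam), k lam⟫_ℂ‖ ^ p ≤ ‖⟪T (k lam), k lam⟫_ℂ‖) :
    ber k A ^ p ≤ ber k T := by
  have hT : 0 ≤ ber k T := Real.iSup_nonneg fun _ => norm_nonneg _
  refine (Real.le_rpow_inv_iff_of_pos (Real.iSup_nonneg fun _ => norm_nonneg _) hT hp).mp ?_
  refine Real.iSup_le (fun lam => ?_) (Real.rpow_nonneg hT _)
  rw [Real.le_rpow_inv_iff_of_pos (norm_nonneg _) hT hp]
  exact (h lam).trans (le_ciSup (bddAbove_range_norm_inner_apply hk T) lam)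

variable [CompleteSpace H]

lemma rpow_re_inner_le_re_inner_rpow {P : H →L[ℂ] H} (hP : 0 ≤ P) {x : H} (hx : ‖x‖ = 1)
    {r : ℝ} (hr : 1 ≤ r) : (⟪P x, x⟫_ℂ).re ^ r ≤ (⟪(P ^ r) x, x⟫_ℂ).re := by
  set c := (⟪P x, x⟫_ℂ).re
  have hc : 0 ≤ c := by simpa using hP.re_inner_nonneg_left x
  rcases hc.eq_or_lt with hc | hc
  · rw [← hc, Real.zero_rpow (by linarith)]
    simpa using (CFC.rpow_nonneg (a := P) (y := r)).re_inner_nonneg_left x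
  set b := r * c ^ (r - 1)
  -- the tangent line of `t ↦ t ^ r` at `c` lies below the graph on the spectrum of `P`
  have tangent : algebraMap ℝ (H →L[ℂ] H) (c ^ r - b * c) + b • P ≤ P ^ r := by
    have hsa : IsSelfAdjoint P := .of_nonneg hP
    rw [CFC.rpow_eq_cfc_real hP, ← cfc_const_mul_id b P, ← cfc_const_add _ _ P]
    refine cfc_mono (fun t ht => ?_) (by fun_prop) (fun t _ => ?_)
    · linarith [rpow_add_mul_sub_le_rpow hc (spectrum_nonneg_of_nonneg hP ht) hr]
    · exact (Real.continuousAt_rpow_const t r (.inr (by linarith))).continuousWithinAt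
  have := re_inner_le_re_inner_of_le tangent x
  rwa [re_inner_algebraMap_add_smul_apply_self _ _ _ hx, sub_add_cancel] at this

lemma rpow_opAbs_two_mul (A : H →L[ℂ] H) {r : ℝ} (hr : 0 ≤ r) :
    CFC.rpow (opAbs A) (2 * r) = (adjoint A * A) ^ r := by
  have hA : 0 ≤ adjoint A * A := by simpa [star_eq_adjoint] using star_mul_self_nonneg A
  rw [opAbs, CFC.sqrt_eq_rpow, CFC.rpow_eq_pow,
    CFC.rpow_rpow_of_exponent_nonneg _ _ _ (by norm_num) (by positivity) hA]
  ring_nf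

lemma norm_inner_rpow_le_re_inner_rpow_opAbs (A : H →L[ℂ] H) {x : H} (hx : ‖x‖ = 1)
    {r : ℝ} (hr : 1 ≤ r) :
    ‖⟪A x, x⟫_ℂ‖ ^ (2 * r) ≤ (⟪(CFC.rpow (opAbs A) (2 * r)) x, x⟫_ℂ).re := by
  have hA : 0 ≤ adjoint A * A := by simpa [star_eq_adjoint] using star_mul_self_nonneg A
  have hquad : (⟪(adjoint A * A) x, x⟫_ℂ).re = ‖A x‖ ^ 2 := by
    rw [mul_apply_eq_comp, adjoint_inner_left, inner_self_eq_norm_sq_to_K]; norm_cast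
  rw [rpow_opAbs_two_mul A (by linarith)]
  calc ‖⟪A x, x⟫_ℂ‖ ^ (2 * r) ≤ ‖A x‖ ^ (2 * r) := by
        gcongr; simpa [hx] using norm_inner_le_norm (𝕜 := ℂ) (A x) x
    _ = (⟪(adjoint A * A) x, x⟫_ℂ).re ^ r := by
        rw [hquad, Real.rpow_mul (norm_nonneg _), Real.rpow_two]
    _ ≤ _ := rpow_re_inner_le_re_inner_rpow hA hx hr

lemma norm_inner_rpow_le_re_inner_rpow_opAbs_adjoint (A : H →L[ℂ] H) {x : H} (hx : ‖x‖ = 1)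
    {r : ℝ} (hr : 1 ≤ r) :
    ‖⟪A x, x⟫_ℂ‖ ^ (2 * r) ≤ (⟪(CFC.rpow (opAbs (adjoint A)) (2 * r)) x, x⟫_ℂ).re := by
  simpa only [adjoint_inner_left, norm_inner_symm] using
    norm_inner_rpow_le_re_inner_rpow_opAbs (adjoint A) hx hr

end Operators

theorem berezin_power_inequality_general
    {H : Type*} [NormedAddCommGroup H] [InnerProductSpace ℂ H] [CompleteSpace H]
    {Ω : Type*} (k : Ω → H) (hk : ∀ lam, ‖k lam‖ = 1)
    (A : H →L[ℂ] H) (r : ℝ) (hr : 1 ≤ r) (α : ℝ) (hα : α ∈ Set.Icc (0 : ℝ) 1) :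
    ber k A ^ (2 * r) ≤
      ber k (α • CFC.rpow (opAbs A) (2 * r)
        + (1 - α) • CFC.rpow (opAbs (adjoint A)) (2 * r)) := by
  refine ber_rpow_le_ber (fun lam => (hk lam).le) (by positivity) fun lam => ?_
  refine (le_re_inner_smul_add_smul_apply_self hα ?_ ?_).trans (Complex.re_le_norm _)
  · exact norm_inner_rpow_le_re_inner_rpow_opAbs A (hk lam) hr
  · exact norm_inner_rpow_le_re_inner_rpow_opAbs_adjoint A (hk lam) hr

theorem berezin_power_inequality
    {H : Type*} [NormedAddCommGroup H] [InnerProductSpace ℂ H] [CompleteSpace H]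
    {Ω : Type*} [Nonempty Ω] (k : Ω → H) (hk : ∀ lam, ‖k lam‖ = 1)
    (A : H →L[ℂ] H) (r : ℝ) (hr : 1 ≤ r) (α : ℝ) (hα : α ∈ Set.Icc (0 : ℝ) 1) :
    ber k A ^ (2 * r) ≤
      ber k (α • CFC.rpow (opAbs A) (2 * r)
        + (1 - α) • CFC.rpow (opAbs (adjoint A)) (2 * r)) :=
  berezin_power_inequality_general k hk A r hr α hα
end

section
/- Let A be a bounded linear operator on H. Then for every α ∈ [0,1], ber(A)^2 ≤ ber(α·A*A + (1−α)·AA*); in particular ber(A)^2 ≤ (1/2)·ber(A*A + AA*). -/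
/-!
For a unit vector `x`, `|⟪A x, x⟫|` is bounded both by `‖A x‖` and by `|⟪x, A† x⟫| ≤ ‖A† x‖`,
so its square is at most `α ‖A x‖² + (1 - α) ‖A† x‖²`, which is the real part of
`⟪(α A†A + (1 - α) AA†) x, x⟫`. Taking the supremum over the normalized kernels gives the first
bound; the second is the case `α = 1/2`, since `ber (r • T) = |r| ber T`.
-/

set_option synthInstance.maxHeartbeats 1000000
set_option maxHeartbeats 1000000

open scoped NNReal
open ContinuousLinearMap

section Berezin

variable {H : Type*} [NormedAddCommGroup H] [InnerProductSpace ℂ H] {Ω : Type*} (k : Ω → H)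

theorem ber_nonneg (T : H →L[ℂ] H) : 0 ≤ ber k T :=
  Real.iSup_nonneg fun _ => norm_nonneg _

theorem ber_le {T : H →L[ℂ] H} {c : ℝ} (hc : 0 ≤ c)
    (h : ∀ lam, ‖(inner ℂ (T (k lam)) (k lam) : ℂ)‖ ≤ c) : ber k T ≤ c :=
  Real.iSup_le h hc

theorem sq_ber_le {T : H →L[ℂ] H} {c : ℝ} (hc : 0 ≤ c)
    (h : ∀ lam, ‖(inner ℂ (T (k lam)) (k lam) : ℂ)‖ ^ 2 ≤ c) : ber k T ^ 2 ≤ c := by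
  have hsqrt : ber k T ≤ √c :=
    ber_le k (Real.sqrt_nonneg c) fun lam => Real.le_sqrt_of_sq_le (h lam)
  calc ber k T ^ 2 ≤ √c ^ 2 := pow_le_pow_left₀ (ber_nonneg k T) hsqrt 2
    _ = c := Real.sq_sqrt hc

variable {k}

theorem norm_inner_le_ber (hk : ∀ lam, ‖k lam‖ = 1) (T : H →L[ℂ] H) (lam : Ω) :
    ‖(inner ℂ (T (k lam)) (k lam) : ℂ)‖ ≤ ber k T := by
  refine le_ciSup (f := fun lam => ‖(inner ℂ (T (k lam)) (k lam) : ℂ)‖) ⟨‖T‖, ?_⟩ lam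
  rintro _ ⟨mu, rfl⟩
  calc ‖(inner ℂ (T (k mu)) (k mu) : ℂ)‖ ≤ ‖T (k mu)‖ * ‖k mu‖ := norm_inner_le_norm _ _
    _ ≤ ‖T‖ * ‖k mu‖ * ‖k mu‖ := by gcongr; exact T.le_opNorm _
    _ = ‖T‖ := by rw [hk, mul_one, mul_one]

theorem ber_smul (r : ℝ) (T : H →L[ℂ] H) : ber k (r • T) = |r| * ber k T := by
  simp only [ber, Real.mul_iSup_of_nonneg (abs_nonneg r), smul_apply, inner_smul_left_eq_smul,
    norm_smul, Real.norm_eq_abs]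

end Berezin

section Adjoint

variable {H : Type*} [NormedAddCommGroup H] [InnerProductSpace ℂ H] [CompleteSpace H]

theorem norm_inner_apply_self_le_norm_adjoint_apply (A : H →L[ℂ] H) (x : H) :
    ‖(inner ℂ (A x) x : ℂ)‖ ≤ ‖adjoint A x‖ * ‖x‖ := by
  rw [← adjoint_inner_right, norm_inner_symm]
  exact norm_inner_le_norm _ _

theorem re_inner_convex_combination_apply_self (A : H →L[ℂ] H) (α : ℝ) (x : H) :
    RCLike.re (inner ℂ ((α • (adjoint A * A) + (1 - α) • (A * adjoint A)) x) x : ℂ) =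
      α * ‖A x‖ ^ 2 + (1 - α) * ‖adjoint A x‖ ^ 2 := by
  rw [apply_norm_sq_eq_inner_adjoint_left, apply_norm_sq_eq_inner_adjoint_left (adjoint A),
    adjoint_adjoint]
  simp only [mul_def, add_apply, smul_apply, inner_add_left, inner_smul_left_eq_smul, map_add,
    RCLike.smul_re]

theorem norm_inner_sq_le_re_inner_convex_combination (A : H →L[ℂ] H) {x : H} (hx : ‖x‖ = 1)
    {α : ℝ} (hα : α ∈ Set.Icc (0 : ℝ) 1) :
    ‖(inner ℂ (A x) x : ℂ)‖ ^ 2 ≤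
      RCLike.re (inner ℂ ((α • (adjoint A * A) + (1 - α) • (A * adjoint A)) x) x : ℂ) := by
  obtain ⟨hα0, hα1⟩ := hα
  have hA : ‖(inner ℂ (A x) x : ℂ)‖ ^ 2 ≤ ‖A x‖ ^ 2 := by
    gcongr
    simpa [hx] using norm_inner_le_norm (𝕜 := ℂ) (A x) x
  have hA' : ‖(inner ℂ (A x) x : ℂ)‖ ^ 2 ≤ ‖adjoint A x‖ ^ 2 := by
    gcongr
    simpa [hx] using norm_inner_apply_self_le_norm_adjoint_apply A x
  rw [re_inner_convex_combination_apply_self]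
  nlinarith

end Adjoint

theorem berezin_sq_convex_combination_general
    {H : Type*} [NormedAddCommGroup H] [InnerProductSpace ℂ H] [CompleteSpace H]
    {Ω : Type*} (k : Ω → H) (hk : ∀ lam, ‖k lam‖ = 1)
    (A : H →L[ℂ] H) (α : ℝ) (hα : α ∈ Set.Icc (0 : ℝ) 1) :
    ber k A ^ 2 ≤ ber k (α • (adjoint A * A) + (1 - α) • (A * adjoint A)) ∧
      ber k A ^ 2 ≤ (1 / 2 : ℝ) * ber k (adjoint A * A + A * adjoint A) := by
  have convex : ∀ β ∈ Set.Icc (0 : ℝ) 1,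
      ber k A ^ 2 ≤ ber k (β • (adjoint A * A) + (1 - β) • (A * adjoint A)) :=
    fun β hβ => sq_ber_le k (ber_nonneg k _) fun lam =>
      (norm_inner_sq_le_re_inner_convex_combination A (hk lam) hβ).trans <|
        (RCLike.re_le_norm _).trans (norm_inner_le_ber hk _ lam)
  refine ⟨convex α hα, ?_⟩
  have half := convex (1 / 2) ⟨by norm_num, by norm_num⟩
  rwa [show (1 / 2 : ℝ) • (adjoint A * A) + (1 - 1 / 2 : ℝ) • (A * adjoint A) =
      (1 / 2 : ℝ) • (adjoint A * A + A * adjoint A) by norm_num [smul_add],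
    ber_smul, abs_of_pos one_half_pos] at half

theorem berezin_sq_convex_combination
    {H : Type*} [NormedAddCommGroup H] [InnerProductSpace ℂ H] [CompleteSpace H]
    {Ω : Type*} [Nonempty Ω] (k : Ω → H) (hk : ∀ lam, ‖k lam‖ = 1)
    (A : H →L[ℂ] H) (α : ℝ) (hα : α ∈ Set.Icc (0 : ℝ) 1) :
    ber k A ^ 2 ≤ ber k (α • (adjoint A * A) + (1 - α) • (A * adjoint A)) ∧
      ber k A ^ 2 ≤ (1 / 2 : ℝ) * ber k (adjoint A * A + A * adjoint A) :=
  berezin_sq_convex_combination_general k hk A α hα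
end
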